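/- In the MDP constructed from an X3C instance (states S = {1,…,n} ∪ {⊥, n+1, n+2, n+3, n+4}, initial state 1, actions Act = {1,…,n+3}, transitions P(s, a, s+1) = 1 if a = s and P(s, a, ⊥) = 1 otherwise for s, a ∈ {1,…,n+3}, with ⊥ and n+4 absorbing), a policy σ reaches the goal state n+4 from the initial state 1 with probability greater than 1/2 if and only if σ(s) = s for every s ∈ {1,…,n+3}; in that case the reachability probability equals 1, and otherwise it equals 0. -/

import Mathlib

namespace Paper12

open scoped NNReal

variable {S : Type} [Fintype S] [DecidableEq S]

/-- Probability of reaching the goal set `G` within `n` steps in the Markov chain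
with transition matrix `T`. -/
def reachAux (T : S → S → ℝ≥0) (G : Finset S) : ℕ → S → ℝ≥0
  | 0, s => if s ∈ G then 1 else 0
  | n + 1, s => if s ∈ G then 1 else ∑ s', T s s' * reachAux T G n s'

/-- Probability of reaching the goal set `G` from state `s` in the Markov chain
with transition matrix `T`. -/
noncomputable def reachProb (T : S → S → ℝ≥0) (G : Finset S) (s : S) : ℝ≥0 :=
  ⨆ n, reachAux T G n s

section X3C

variable (n : ℕ)

/-- States of the MDP constructed from an X3C instance: the indices `0, …, n + 2`
represent the paper's states `1, …, n + 3`, index `n + 3` represents the goal state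
`n + 4`, and index `n + 4` represents the sink state `⊥`. -/
abbrev St := Fin (n + 5)

/-- Actions `1, …, n + 3` of the constructed MDP. -/
abbrev Ac := Fin (n + 3)

/-- The goal state `n + 4`. -/
def goalSt : St n := ⟨n + 3, by omega⟩

/-- The sink state `⊥`. -/
def botSt : St n := ⟨n + 4, by omega⟩

/-- The initial state `1`. -/
def initSt : St n := ⟨0, by omega⟩

/-- The (deterministic) successor under policy `σ`: in each non-absorbing state `s`,
the unique action `a = s` progresses to `s + 1` while every other action leads to the
sink `⊥`; the goal state and the sink are absorbing. -/
def stepSt (σ : St n → Ac n) (s : St n) : St n :=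
  if h : (s : ℕ) < n + 3 then
    (if ((σ s) : ℕ) = (s : ℕ) then ⟨(s : ℕ) + 1, by omega⟩ else botSt n)
  else s

/-- The transition matrix of the Markov chain induced by policy `σ` (all transitions
of the constructed MDP are Dirac distributions). -/
def transMat (σ : St n → Ac n) (s s' : St n) : ℝ≥0 :=
  if s' = stepSt n σ s then 1 else 0

end X3C

/-!
Every transition of the chain induced by a policy is a Dirac distribution, so the chain is just
the orbit of `s_init` under a successor map, and the probability of reaching the goal is `1` if
the orbit meets it and `0` otherwise. Along the orbit, `s ≠ ⊥` holds only while the policy has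
chosen the action `σ(s) = s` at every state visited so far; the orbit therefore reaches the goal
state `n + 4` exactly when `σ` is the identity on `{1, …, n + 3}`.
-/

section Deterministic

lemma reachAux_dirac (f : S → S) (G : Finset S) (k : ℕ) (s : S) :
    reachAux (fun s s' => if s' = f s then 1 else 0) G k s =
      if ∃ j ≤ k, f^[j] s ∈ G then 1 else 0 := by
  induction k generalizing s with
  | zero => simp [reachAux]
  | succ k ih =>
    have orbit_meets : (∃ j ≤ k + 1, f^[j] s ∈ G) ↔ s ∈ G ∨ ∃ j ≤ k, f^[j] (f s) ∈ G := by
      constructor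
      · rintro ⟨_ | j, hj, hG⟩
        exacts [Or.inl hG, Or.inr ⟨j, by omega, hG⟩]
      · rintro (hG | ⟨j, hj, hG⟩)
        exacts [⟨0, by omega, hG⟩, ⟨j + 1, by omega, hG⟩]
    simp only [reachAux, ite_mul, one_mul, zero_mul, Finset.sum_ite_eq', Finset.mem_univ,
      if_true, ih, orbit_meets]
    by_cases hs : s ∈ G <;> simp [hs]

open Classical in
lemma reachProb_dirac (f : S → S) (G : Finset S) (s : S) :
    reachProb (fun s s' => if s' = f s then 1 else 0) G s =
      if ∃ j, f^[j] s ∈ G then 1 else 0 := by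
  simp only [reachProb, reachAux_dirac]
  split_ifs with hreach
  · obtain ⟨j, hj⟩ := hreach
    have le_one (k : ℕ) : (if ∃ i ≤ k, f^[i] s ∈ G then 1 else 0 : ℝ≥0) ≤ 1 := by
      split_ifs <;> simp
    refine le_antisymm (ciSup_le le_one) ?_
    refine le_ciSup_of_le ⟨1, Set.forall_mem_range.2 le_one⟩ j ?_
    rw [if_pos ⟨j, le_rfl, hj⟩]
  · simp [not_exists.1 hreach]

end Deterministic

section X3C

variable {n : ℕ} {σ : St n → Ac n}

lemma stepSt_of_lt_of_eq {s : St n} (hs : (s : ℕ) < n + 3) (hσ : (σ s : ℕ) = s) :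
    stepSt n σ s = ⟨s + 1, by omega⟩ := by
  simp [stepSt, hs, hσ]

lemma iterate_stepSt_initSt
    (hσ : ∀ s : St n, (s : ℕ) < n + 3 → ((σ s) : ℕ) = (s : ℕ)) {k : ℕ} (hk : k ≤ n + 3) :
    (stepSt n σ)^[k] (initSt n) = ⟨k, by omega⟩ := by
  induction k with
  | zero => rfl
  | succ k ih =>
    rw [Function.iterate_succ_apply', ih (by omega)]
    have hk' : k < n + 3 := by omega
    exact stepSt_of_lt_of_eq hk' (hσ _ hk')

def OnTrack (σ : St n → Ac n) (s : St n) : Prop :=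
  s = botSt n ∨ ∀ i : St n, i < s → ((σ i) : ℕ) = (i : ℕ)

lemma onTrack_stepSt {s : St n} (hs : OnTrack σ s) : OnTrack σ (stepSt n σ s) := by
  unfold stepSt
  split_ifs with hlt heq
  · refine Or.inr fun i hi => ?_
    rcases hs with rfl | hprefix
    · simp [botSt] at hlt
    · rcases Nat.lt_succ_iff_lt_or_eq.1 (Fin.lt_def.1 hi) with hi' | hi'
      · exact hprefix i hi'
      · rwa [Fin.ext hi']
  · exact Or.inl rfl
  · exact hs

lemma onTrack_iterate_stepSt_initSt (k : ℕ) : OnTrack σ ((stepSt n σ)^[k] (initSt n)) := by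
  induction k with
  | zero => exact Or.inr fun i hi => absurd hi (Fin.not_lt_zero i)
  | succ k ih => rw [Function.iterate_succ_apply']; exact onTrack_stepSt ih

lemma exists_iterate_stepSt_eq_goalSt_iff :
    (∃ k, (stepSt n σ)^[k] (initSt n) = goalSt n) ↔
      ∀ s : St n, (s : ℕ) < n + 3 → ((σ s) : ℕ) = (s : ℕ) := by
  constructor
  · rintro ⟨k, hk⟩ s hs
    have := onTrack_iterate_stepSt_initSt (σ := σ) k
    rw [hk] at this
    rcases this with hbot | hprefix
    · simp [goalSt, botSt] at hbot
    · exact hprefix s (by simpa [Fin.lt_def, goalSt] using hs)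
  · intro hσ
    exact ⟨n + 3, iterate_stepSt_initSt hσ le_rfl⟩

lemma reachProb_transMat (σ : St n → Ac n) :
    reachProb (transMat n σ) {goalSt n} (initSt n) =
      if ∀ s : St n, (s : ℕ) < n + 3 → ((σ s) : ℕ) = (s : ℕ) then 1 else 0 := by
  have := reachProb_dirac (stepSt n σ) {goalSt n} (initSt n)
  simp only [Finset.mem_singleton, exists_iterate_stepSt_eq_goalSt_iff] at this
  convert this
  rfl

end X3C

/-- In the MDP constructed from an X3C instance, a policy `σ`
reaches the goal state from the initial state with probability greater than `1/2`
iff `σ(s) = s` for every state `s ∈ {1, …, n + 3}`; in that case the reachability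
probability equals `1`, and otherwise it equals `0`. -/
theorem x3c_mdp_policy_value (n : ℕ) (σ : St n → Ac n) :
    ((1 / 2 : ℝ≥0) < reachProb (transMat n σ) {goalSt n} (initSt n) ↔
      ∀ s : St n, (s : ℕ) < n + 3 → ((σ s) : ℕ) = (s : ℕ)) ∧
    ((∀ s : St n, (s : ℕ) < n + 3 → ((σ s) : ℕ) = (s : ℕ)) →
      reachProb (transMat n σ) {goalSt n} (initSt n) = 1) ∧
    (¬ (∀ s : St n, (s : ℕ) < n + 3 → ((σ s) : ℕ) = (s : ℕ)) →
      reachProb (transMat n σ) {goalSt n} (initSt n) = 0) := by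
  rw [reachProb_transMat]
  by_cases hσ : ∀ s : St n, (s : ℕ) < n + 3 → ((σ s) : ℕ) = (s : ℕ)
  · rw [if_pos hσ]
    exact ⟨iff_of_true (by norm_num) hσ, fun _ => rfl, fun h => absurd hσ h⟩
  · rw [if_neg hσ]
    exact ⟨iff_of_false (by simp) hσ, fun h => absurd h hσ, fun _ => rfl⟩

end Paper12
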